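/- arXiv:2003.06218 — 2 statements merged into one kernel-verified Lean document; each statement's English description precedes it below -/
import Mathlib

section
/- Let 0 < s₁ < s₂ and let L₁, L₂ be random variables such that L₂ is Gamma(as₂, b)-distributed and L₁ = p·L₂ where p ~ Beta(as₁, a(s₂ - s₁)) is independent of L₂ (the gamma bridge construction). Then for nonnegative integers n₁, n₂, E[L₁^{n₁} L₂^{n₂}] = (∏_{r=0}^{n₁-1} (as₁ + r)) · (∏_{r=n₁}^{n₁+n₂-1} (as₂ + r)) / b^{n₁+n₂}. -/
open MeasureTheory Real Set ProbabilityTheory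
open scoped ENNReal NNReal

/-- The density of the Beta(α, β) distribution. -/
noncomputable def betaPDFReal (α β x : ℝ) : ℝ :=
  if x ∈ Set.Ioo (0:ℝ) 1 then
    x ^ (α - 1) * (1 - x) ^ (β - 1) / (Real.Gamma α * Real.Gamma β / Real.Gamma (α + β))
  else 0

/-- The Beta(α, β) measure on `ℝ`. -/
noncomputable def betaMeasure (α β : ℝ) : Measure ℝ :=
  MeasureTheory.volume.withDensity fun x => ENNReal.ofReal (_root_.betaPDFReal α β x)

lemma myGamma_add_nat {x : ℝ} (hx : 0 < x) (n : ℕ) :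
    Real.Gamma (x + n) = Real.Gamma x * ∏ r ∈ Finset.range n, (x + r) := by
  induction n with
  | zero => simp
  | succ n ih =>
    have h : x + (n + 1 : ℕ) = (x + n) + 1 := by push_cast; ring
    rw [h, Real.Gamma_add_one (by positivity), ih, Finset.prod_range_succ]
    push_cast; ring

lemma my_real_betaIntegral {u v : ℝ} (hu : 0 < u) (hv : 0 < v) :
    ∫ x in Set.Ioo (0:ℝ) 1, x ^ (u - 1) * (1 - x) ^ (v - 1)
      = Real.Gamma u * Real.Gamma v / Real.Gamma (u + v) := by
  have h1 : ((∫ x in Set.Ioo (0:ℝ) 1, x ^ (u - 1) * (1 - x) ^ (v - 1) : ℝ) : ℂ)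
      = Complex.betaIntegral u v := by
    rw [← MeasureTheory.integral_Ioc_eq_integral_Ioo,
      ← intervalIntegral.integral_of_le zero_le_one, ← intervalIntegral.integral_ofReal,
      Complex.betaIntegral]
    refine intervalIntegral.integral_congr fun x hx => ?_
    rw [Set.uIcc_of_le zero_le_one] at hx
    have hx0 : (0:ℝ) ≤ x := hx.1
    have hx1 : (0:ℝ) ≤ 1 - x := by linarith [hx.2]
    rw [Complex.ofReal_mul, Complex.ofReal_cpow hx0, Complex.ofReal_cpow hx1]
    push_cast
    ring
  have h2 := Complex.Gamma_mul_Gamma_eq_betaIntegral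
    (s := (u:ℂ)) (t := (v:ℂ)) (by simpa using hu) (by simpa using hv)
  rw [← h1, ← Complex.ofReal_add, Complex.Gamma_ofReal, Complex.Gamma_ofReal,
    Complex.Gamma_ofReal, ← Complex.ofReal_mul, ← Complex.ofReal_mul] at h2
  have h3 := Complex.ofReal_inj.mp h2
  have hG : Real.Gamma (u + v) ≠ 0 := (Real.Gamma_pos_of_pos (by positivity)).ne'
  field_simp
  linarith [h3]

lemma my_gammaMoment {α b : ℝ} (hα : 0 < α) (hb : 0 < b) (m : ℕ) :
    ∫ x, x ^ m ∂(ProbabilityTheory.gammaMeasure α b)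
      = (∏ r ∈ Finset.range m, (α + r)) / b ^ m := by
  have hmeas : Measurable fun x => Real.toNNReal (ProbabilityTheory.gammaPDFReal α b x) :=
    (ProbabilityTheory.measurable_gammaPDFReal α b).real_toNNReal
  rw [ProbabilityTheory.gammaMeasure]
  have hd : (ProbabilityTheory.gammaPDF α b)
      = fun x => ((Real.toNNReal (ProbabilityTheory.gammaPDFReal α b x) : ℝ≥0) : ℝ≥0∞) := by
    funext x
    rw [ProbabilityTheory.gammaPDF, ENNReal.ofReal]
  rw [hd, integral_withDensity_eq_integral_smul hmeas]
  have h1 : ∀ x : ℝ, Real.toNNReal (ProbabilityTheory.gammaPDFReal α b x) • (x ^ m)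
      = ProbabilityTheory.gammaPDFReal α b x * x ^ m := fun x => by
    rw [NNReal.smul_def, smul_eq_mul, Real.coe_toNNReal _
      (ProbabilityTheory.gammaPDFReal_nonneg hα hb x)]
  simp_rw [h1]
  rw [← setIntegral_eq_integral_of_forall_compl_eq_zero (s := Set.Ici 0)
    (fun x hx => by
      rw [ProbabilityTheory.gammaPDFReal, if_neg (by simpa using hx), zero_mul]),
    integral_Ici_eq_integral_Ioi]
  have h2 : ∀ x ∈ Set.Ioi (0:ℝ), ProbabilityTheory.gammaPDFReal α b x * x ^ m
      = (b ^ α / Real.Gamma α) * (x ^ (α + m - 1) * Real.exp (-(b * x))) := by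
    intro x hx
    have hx : (0:ℝ) < x := hx
    rw [ProbabilityTheory.gammaPDFReal, if_pos hx.le]
    rw [show (x:ℝ) ^ m = x ^ ((m:ℕ):ℝ) from (Real.rpow_natCast x m).symm,
      mul_assoc, mul_comm (Real.exp _), ← mul_assoc, mul_assoc (b ^ α / Real.Gamma α),
      ← Real.rpow_add hx]
    ring_nf
  rw [setIntegral_congr_fun measurableSet_Ioi h2, integral_const_mul,
    integral_rpow_mul_exp_neg_mul_Ioi (by positivity) hb]
  rw [myGamma_add_nat hα m]
  have hbb : b ^ α * (1 / b) ^ (α + (m:ℝ)) = (b ^ m)⁻¹ := by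
    rw [Real.rpow_add (by positivity), ← mul_assoc, ← Real.mul_rpow hb.le (by positivity),
      mul_one_div, div_self hb.ne', Real.one_rpow, one_mul,
      Real.rpow_natCast, one_div, inv_pow]
  have hΓ : Real.Gamma α ≠ 0 := (Real.Gamma_pos_of_pos hα).ne'
  calc b ^ α / Real.Gamma α * ((1 / b) ^ (α + (m:ℝ)) * (Real.Gamma α * ∏ r ∈ Finset.range m, (α + r)))
      = (b ^ α * (1 / b) ^ (α + (m:ℝ))) * (Real.Gamma α / Real.Gamma α) * ∏ r ∈ Finset.range m, (α + r) := by ring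
    _ = (∏ r ∈ Finset.range m, (α + r)) / b ^ m := by
        rw [div_self hΓ, hbb]; ring

lemma measurable_betaPDFReal (α β : ℝ) : Measurable (_root_.betaPDFReal α β) := by
  unfold _root_.betaPDFReal
  exact Measurable.ite measurableSet_Ioo (by fun_prop) measurable_const

lemma betaPDFReal_nonneg {α β : ℝ} (hα : 0 < α) (hβ : 0 < β) (x : ℝ) :
    0 ≤ _root_.betaPDFReal α β x := by
  unfold _root_.betaPDFReal
  split_ifs with h
  · obtain ⟨hx0, hx1⟩ := h
    apply div_nonneg
    · exact mul_nonneg (Real.rpow_nonneg hx0.le _) (Real.rpow_nonneg (by linarith) _)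
    · have h1 := Real.Gamma_pos_of_pos hα
      have h2 := Real.Gamma_pos_of_pos hβ
      have h3 := Real.Gamma_pos_of_pos (by linarith : 0 < α + β)
      positivity
  · exact le_refl 0

lemma my_betaMoment {α β : ℝ} (hα : 0 < α) (hβ : 0 < β) (n : ℕ) :
    ∫ x, x ^ n ∂(_root_.betaMeasure α β)
      = (∏ r ∈ Finset.range n, (α + r)) / (∏ r ∈ Finset.range n, (α + β + r)) := by
  have hmeas : Measurable fun x => Real.toNNReal (_root_.betaPDFReal α β x) :=
    (_root_.measurable_betaPDFReal α β).real_toNNReal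
  rw [_root_.betaMeasure]
  have hd : (fun x => ENNReal.ofReal (_root_.betaPDFReal α β x))
      = fun x => ((Real.toNNReal (_root_.betaPDFReal α β x) : ℝ≥0) : ℝ≥0∞) := by
    funext x; rw [ENNReal.ofReal]
  rw [hd, integral_withDensity_eq_integral_smul hmeas]
  have h1 : ∀ x : ℝ, Real.toNNReal (_root_.betaPDFReal α β x) • (x ^ n)
      = _root_.betaPDFReal α β x * x ^ n := fun x => by
    rw [NNReal.smul_def, smul_eq_mul, Real.coe_toNNReal _ (_root_.betaPDFReal_nonneg hα hβ x)]
  simp_rw [h1]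
  rw [← setIntegral_eq_integral_of_forall_compl_eq_zero (s := Set.Ioo 0 1)
    (fun x hx => by rw [_root_.betaPDFReal, if_neg hx, zero_mul])]
  have h3 : Real.Gamma α ≠ 0 := (Real.Gamma_pos_of_pos hα).ne'
  have h4 : Real.Gamma β ≠ 0 := (Real.Gamma_pos_of_pos hβ).ne'
  have h5 : Real.Gamma (α + β) ≠ 0 := (Real.Gamma_pos_of_pos (by positivity)).ne'
  have h2 : ∀ x ∈ Set.Ioo (0:ℝ) 1, _root_.betaPDFReal α β x * x ^ n
      = (Real.Gamma (α + β) / (Real.Gamma α * Real.Gamma β))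
        * (x ^ (α + n - 1) * (1 - x) ^ (β - 1)) := by
    intro x hx
    rw [_root_.betaPDFReal, if_pos hx,
      show (x:ℝ) ^ n = x ^ ((n:ℕ):ℝ) from (Real.rpow_natCast x n).symm,
      show x ^ (α + (n:ℝ) - 1) = x ^ (α - 1) * x ^ ((n:ℕ):ℝ) by
        rw [← Real.rpow_add hx.1]; ring_nf]
    field_simp
  rw [setIntegral_congr_fun measurableSet_Ioo h2, integral_const_mul,
    my_real_betaIntegral (by positivity) hβ]
  rw [show α + (n:ℝ) + β = (α + β) + (n:ℝ) by ring, myGamma_add_nat hα n,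
    myGamma_add_nat (by positivity : (0:ℝ) < α + β) n]
  have h6 : (∏ r ∈ Finset.range n, (α + β + (r:ℝ))) ≠ 0 :=
    Finset.prod_ne_zero_iff.mpr fun r _ => by positivity
  field_simp
/-- Let `0 < s₁ < s₂`, let `L₂ ~ Gamma(as₂, b)` and `L₁ = p·L₂` with
`p ~ Beta(as₁, a(s₂ - s₁))` independent of `L₂` (the gamma bridge construction).
Then for nonnegative integers `n₁, n₂`,
`E[L₁^{n₁} L₂^{n₂}] = (∏_{r=0}^{n₁-1} (as₁ + r)) · (∏_{r=n₁}^{n₁+n₂-1} (as₂ + r)) / b^{n₁+n₂}`. -/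
theorem gammaBridge_joint_moment {Ω : Type*} [MeasurableSpace Ω] (μ : Measure Ω)
    [IsProbabilityMeasure μ] (p L₂ : Ω → ℝ) (hp : Measurable p) (hL₂ : Measurable L₂)
    (a b s₁ s₂ : ℝ) (ha : 0 < a) (hb : 0 < b) (hs₁ : 0 < s₁) (hs : s₁ < s₂)
    (hplaw : Measure.map p μ = _root_.betaMeasure (a * s₁) (a * (s₂ - s₁)))
    (hL₂law : Measure.map L₂ μ = ProbabilityTheory.gammaMeasure (a * s₂) b)
    (hindep : ProbabilityTheory.IndepFun p L₂ μ) (n₁ n₂ : ℕ) :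
    ∫ ω, (p ω * L₂ ω) ^ n₁ * (L₂ ω) ^ n₂ ∂μ
      = (∏ r ∈ Finset.range n₁, (a * s₁ + r))
        * (∏ r ∈ Finset.Ico n₁ (n₁ + n₂), (a * s₂ + r)) / b ^ (n₁ + n₂) := by
  have hmain : ∀ ω, (p ω * L₂ ω) ^ n₁ * (L₂ ω) ^ n₂
      = (p ω) ^ n₁ * (L₂ ω) ^ (n₁ + n₂) := fun ω => by
    rw [mul_pow, pow_add]; ring
  simp_rw [hmain]
  have hφ : Measurable fun x : ℝ => x ^ n₁ := measurable_id.pow_const n₁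
  have hψ : Measurable fun x : ℝ => x ^ (n₁ + n₂) := measurable_id.pow_const _
  have hi : ProbabilityTheory.IndepFun (fun ω => (p ω) ^ n₁)
      (fun ω => (L₂ ω) ^ (n₁ + n₂)) μ := hindep.comp hφ hψ
  rw [hi.integral_fun_mul_eq_mul_integral ((hp.pow_const n₁).aestronglyMeasurable)
    ((hL₂.pow_const _).aestronglyMeasurable)]
  have e1 : ∫ ω, (p ω) ^ n₁ ∂μ
      = ∫ x, x ^ n₁ ∂(_root_.betaMeasure (a * s₁) (a * (s₂ - s₁))) := by
    rw [← hplaw, integral_map hp.aemeasurable hφ.aestronglyMeasurable]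
  have e2 : ∫ ω, (L₂ ω) ^ (n₁ + n₂) ∂μ
      = ∫ x, x ^ (n₁ + n₂) ∂(ProbabilityTheory.gammaMeasure (a * s₂) b) := by
    rw [← hL₂law, integral_map hL₂.aemeasurable hψ.aestronglyMeasurable]
  rw [e1, e2, my_betaMoment (by positivity) (by nlinarith), my_gammaMoment (by nlinarith) hb]
  have hab : (∏ r ∈ Finset.range n₁, (a * s₁ + a * (s₂ - s₁) + (r:ℝ)))
      = ∏ r ∈ Finset.range n₁, (a * s₂ + (r:ℝ)) :=
    Finset.prod_congr rfl fun r _ => by ring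
  have hsplit : (∏ r ∈ Finset.range (n₁ + n₂), (a * s₂ + (r:ℝ)))
      = (∏ r ∈ Finset.range n₁, (a * s₂ + (r:ℝ)))
        * ∏ r ∈ Finset.Ico n₁ (n₁ + n₂), (a * s₂ + (r:ℝ)) := by
    rw [Finset.range_eq_Ico,
      ← Finset.prod_Ico_consecutive _ (Nat.zero_le n₁) (Nat.le_add_right n₁ n₂),
      ← Finset.range_eq_Ico]
  rw [hab, hsplit]
  have hD : (∏ r ∈ Finset.range n₁, (a * s₂ + (r:ℝ))) ≠ 0 :=
    Finset.prod_ne_zero_iff.mpr fun r _ => by nlinarith [Nat.cast_nonneg (α := ℝ) r]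
  have hB : (b:ℝ) ^ (n₁ + n₂) ≠ 0 := by positivity
  field_simp
end

section
/- For a > 0, b > 0, κ > 0, t > 0 and ω ∈ ℝ, the time integral of the gamma characteristic exponent along an exponentially decaying kernel satisfies ∫₀^t (−a) log(1 − iω e^{−κ(t−s)}/b) ds = −(a/κ)[Li₂(iω e^{−κt}/b) − Li₂(iω/b)], where Li₂ is the principal-branch dilogarithm Li₂(z) = −∫₀^z log(1−u)/u du. -/
open MeasureTheory Real Complex intervalIntegral Set

/-- The dilogarithm `Li₂(z) = −∫₀¹ log(1 − z·t)/t dt` (principal branch), the analytic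
continuation of `Σ_{k≥1} z^k/k²`. -/
noncomputable def Li2 (z : ℂ) : ℂ :=
  -∫ t in (0:ℝ)..1, Complex.log (1 - z * (t : ℂ)) / (t : ℂ)

noncomputable def dlog (z : ℂ) (v : ℝ) : ℂ := Complex.log (1 - z * v) / v

lemma slit (z : ℂ) (hz : z.re = 0) (v : ℝ) : 1 - z * (v:ℂ) ∈ Complex.slitPlane := by
  rw [Complex.mem_slitPlane_iff]
  left
  simp [Complex.sub_re, Complex.mul_re, hz]

lemma hasDerivAt_log1 (z : ℂ) (hz : z.re = 0) (v : ℝ) :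
    HasDerivAt (fun u : ℝ => Complex.log (1 - z * u)) ((1 - z * v)⁻¹ * (-z)) v := by
  have h1 : HasDerivAt (fun u : ℝ => 1 - z * (u:ℂ)) (-z) v := by
    simpa using ((hasDerivAt_id v).ofReal_comp.const_mul z).const_sub 1
  exact (Complex.hasDerivAt_log (slit z hz v)).comp v h1

lemma dlog_continuousAt (z : ℂ) (hz : z.re = 0) {x : ℝ} (hx : x ≠ 0) :
    ContinuousAt (dlog z) x := by
  have hin : ContinuousAt (fun v : ℝ => 1 - z * (v:ℂ)) x := by fun_prop
  apply ContinuousAt.div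
  · exact hin.clog (slit z hz x)
  · fun_prop
  · exact_mod_cast hx

lemma cont_update (z : ℂ) (hz : z.re = 0) :
    Continuous (Function.update (dlog z) 0 (-z)) := by
  rw [continuous_iff_continuousAt]
  intro x
  rcases eq_or_ne x 0 with rfl | hx
  · rw [continuousAt_update_same]
    have hd := hasDerivAt_log1 z hz 0
    rw [hasDerivAt_iff_tendsto_slope] at hd
    have hval : ((1:ℂ) - z * ((0:ℝ):ℂ))⁻¹ * (-z) = -z := by simp
    rw [hval] at hd
    refine hd.congr' ?_
    filter_upwards [self_mem_nhdsWithin] with v hv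
    simp [slope, dlog, Complex.log_one, Complex.real_smul, div_eq_inv_mul]
  · refine (dlog_continuousAt z hz hx).congr ?_
    filter_upwards [isOpen_compl_singleton.mem_nhds hx] with v hv
    exact (Function.update_of_ne hv _ _).symm

lemma dlog_intervalIntegrable (z : ℂ) (hz : z.re = 0) (a b : ℝ) :
    IntervalIntegrable (dlog z) volume a b := by
  have h0 : ∀ᵐ v : ℝ, v ≠ 0 := by
    rw [MeasureTheory.ae_iff]
    have hs : {a : ℝ | ¬a ≠ 0} = {0} := by ext v; simp
    rw [hs]
    exact Real.volume_singleton
  have heq : Function.update (dlog z) 0 (-z) =ᵐ[volume] dlog z := by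
    filter_upwards [h0] with v hv
    exact Function.update_of_ne hv _ _
  exact ((cont_update z hz).intervalIntegrable a b).congr_ae
    (heq.filter_mono (MeasureTheory.ae_mono Measure.restrict_le_self))

lemma Li2_scale (z : ℂ) (r : ℝ) (hr : r ≠ 0) :
    Li2 (z * r) = -∫ v in (0:ℝ)..r, dlog z v := by
  unfold Li2
  congr 1
  have key : ∀ u : ℝ, Complex.log (1 - z * r * u) / u = r • dlog z (u * r) := by
    intro u
    rcases eq_or_ne u 0 with rfl | hu
    · simp [dlog]
    · have hu' : (u:ℂ) ≠ 0 := by exact_mod_cast hu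
      have hr' : (r:ℂ) ≠ 0 := by exact_mod_cast hr
      have harg : z * ((u * r : ℝ) : ℂ) = z * r * u := by push_cast; ring
      simp only [dlog, Complex.real_smul, harg]
      push_cast
      field_simp
  simp_rw [key, intervalIntegral.integral_smul,
    intervalIntegral.integral_comp_mul_right (dlog z) hr, zero_mul, one_mul,
    smul_smul, mul_inv_cancel₀ hr, one_smul]

lemma subst_exp (z : ℂ) (hz : z.re = 0) (κ t : ℝ) (hκ : 0 < κ) :
    (∫ s in (0:ℝ)..t, Complex.log (1 - z * (Real.exp (-(κ * (t - s))) : ℝ)))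
      = (κ⁻¹ : ℂ) • ∫ v in Real.exp (-(κ * t))..(1:ℝ), dlog z v := by
  set φ : ℝ → ℝ := fun s => Real.exp (-(κ * (t - s))) with hφdef
  have hφpos : ∀ s, 0 < φ s := fun s => Real.exp_pos _
  have hφ : ∀ s, HasDerivAt φ (κ * φ s) s := by
    intro s
    have h1 : HasDerivAt (fun s : ℝ => -(κ * (t - s))) κ s := by
      exact (((hasDerivAt_id s).const_sub t).const_mul κ).neg.congr_deriv (by ring)
    exact ((Real.hasDerivAt_exp _).comp s h1).congr_deriv (mul_comm _ _)
  have hg : ContinuousOn (fun v : ℝ => (κ⁻¹ : ℂ) • dlog z v) (φ '' uIcc 0 t) := by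
    intro x hx
    obtain ⟨s, _, rfl⟩ := hx
    exact (continuousAt_const.mul (dlog_continuousAt z hz (hφpos s).ne')).continuousWithinAt
  have key := intervalIntegral.integral_comp_smul_deriv' (f := φ) (f' := fun s => κ * φ s)
      (g := fun v : ℝ => (κ⁻¹ : ℂ) • dlog z v) (a := 0) (b := t)
      (fun x _ => hφ x) (by fun_prop) hg
  have hφ0 : φ 0 = Real.exp (-(κ * t)) := by simp [hφdef]
  have hφt : φ t = 1 := by simp [hφdef]
  rw [hφ0, hφt] at key
  rw [← intervalIntegral.integral_smul, ← key]
  apply intervalIntegral.integral_congr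
  intro s _
  have hne : ((κ * φ s : ℝ) : ℂ) ≠ 0 := by
    exact_mod_cast (mul_pos hκ (hφpos s)).ne'
  simp only [Function.comp, dlog, Complex.real_smul, smul_eq_mul]
  have hκ' : (κ : ℂ) ≠ 0 := by exact_mod_cast hκ.ne'
  have hφs' : ((φ s : ℝ) : ℂ) ≠ 0 := by exact_mod_cast (hφpos s).ne'
  have hcast : ((φ s : ℝ) : ℂ) = Complex.exp (-((κ:ℂ) * ((t:ℂ) - (s:ℂ)))) := by
    rw [hφdef]
    push_cast
    ring_nf
  have hcast' : ((φ s : ℝ) : ℂ) = Complex.exp (-((κ:ℂ) * t) + (κ:ℂ) * s) := by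
    rw [hcast]; ring_nf
  rw [hcast]
  field_simp [Complex.exp_ne_zero]
  rw [Complex.ofReal_mul, hcast]
  ring


/-- For `a, b, κ, t > 0` and `ω ∈ ℝ`,
`∫₀^t (−a) log(1 − iω e^{−κ(t−s)}/b) ds = −(a/κ)[Li₂(iω e^{−κt}/b) − Li₂(iω/b)]`,
with the principal branch of the logarithm. -/
theorem gamma_exponent_time_integral (a b κ t ω : ℝ) (ha : 0 < a) (hb : 0 < b)
    (hκ : 0 < κ) (ht : 0 < t) :
    (∫ s in (0:ℝ)..t,
        (-(a : ℂ)) * Complex.log (1 - Complex.I * ω * Complex.exp (-(κ * (t - s)) : ℂ) / b))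
      = -((a : ℂ) / κ)
        * (Li2 (Complex.I * ω * Complex.exp (-(κ * t) : ℂ) / b) - Li2 (Complex.I * ω / b)) := by
  set z : ℂ := Complex.I * ω / b with hzdef
  have hz : z.re = 0 := by
    simp [hzdef, Complex.div_re, Complex.mul_re]
  set r : ℝ := Real.exp (-(κ * t)) with hrdef
  have hr : r ≠ 0 := (Real.exp_pos _).ne'
  have harg : ∀ s ∈ uIcc (0:ℝ) t,
      (fun s : ℝ => (-(a:ℂ)) *
        Complex.log (1 - Complex.I * ω * Complex.exp (-(κ * (t - s)) : ℂ) / b)) s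
      = (fun s : ℝ => (-(a:ℂ)) *
        Complex.log (1 - z * ((Real.exp (-(κ * (t - s))) : ℝ) : ℂ))) s := by
    intro s _
    have : Complex.I * ω * Complex.exp (-(κ * (t - s)) : ℂ) / b
        = z * ((Real.exp (-(κ * (t - s))) : ℝ) : ℂ) := by
      rw [hzdef]; push_cast; ring
    simp only [this]
  rw [intervalIntegral.integral_congr harg, intervalIntegral.integral_const_mul,
    subst_exp z hz κ t hκ]
  have h1 : Complex.I * ω * Complex.exp (-(κ * t) : ℂ) / b = z * (r:ℂ) := by
    rw [hzdef, hrdef]; push_cast; ring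
  have h2 : Li2 z = -∫ v in (0:ℝ)..1, dlog z v := by
    simpa using Li2_scale z 1 one_ne_zero
  rw [h1, Li2_scale z r hr, h2]
  have hsub : (∫ v in (0:ℝ)..1, dlog z v) - (∫ v in (0:ℝ)..r, dlog z v)
      = ∫ v in r..(1:ℝ), dlog z v :=
    intervalIntegral.integral_interval_sub_left (dlog_intervalIntegrable z hz 0 1)
      (dlog_intervalIntegrable z hz 0 r)
  rw [← hsub]
  have hκ' : (κ:ℂ) ≠ 0 := by exact_mod_cast hκ.ne'
  simp only [smul_eq_mul]
  ring
end
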